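/- Type (a) and type (b) molecules form a bounded subset of H¹_r(X): for every α > 0 there is a constant C, depending only on α and the doubling constant C_D, such that every type (a) molecule and every type (b) molecule with parameter α belongs to H¹_r(X) with H¹_r(X)-norm at most C. -/

import Mathlib

open MeasureTheory Metric Filter Set

noncomputable section

/-- The parabolic quasi-distance on `ℝ × E`. -/
def pdist {E : Type*} [MetricSpace E] (p q : ℝ × E) : ℝ :=
  max (Real.sqrt |p.1 - q.1|) (dist p.2 q.2)

/-- The open parabolic ball in `N = ℝ × E`. -/
def pball {E : Type*} [MetricSpace E] (c : ℝ × E) (r : ℝ) : Set (ℝ × E) :=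
  {p | pdist p c < r}

/-- The upper half space `X = (0,∞) × E` of `N = ℝ × E`. -/
def Xset (E : Type*) : Set (ℝ × E) := {p | 0 < p.1}

/-- The product measure `ν = Lebesgue ⊗ μ` on `N = ℝ × E`. -/
def pmeas {E : Type*} [MeasurableSpace E] (μ : Measure E) : Measure (ℝ × E) :=
  (volume : Measure ℝ).prod μ

/-- A `(1,2)`-atom on `N`: supported in a parabolic ball `Q`, mean value zero, and
`‖a‖_{L²(ν)} ≤ ν(Q)^{-1/2}`. -/
def IsAtom12 {E : Type*} [MetricSpace E] [MeasurableSpace E]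
    (μ : Measure E) (a : ℝ × E → ℝ) : Prop :=
  ∃ (c : ℝ × E) (r : ℝ), 0 < r ∧ Function.support a ⊆ pball c r ∧
    Integrable a (pmeas μ) ∧ (∫ p, a p ∂(pmeas μ)) = 0 ∧
    eLpNorm a 2 (pmeas μ) ≤ (pmeas μ (pball c r)) ^ (-(1:ℝ)/2)

/-- `f = Σ λ_i a_i` with convergence in `L¹(ρ)`. -/
def HasL1Decomp {E : Type*} [MeasurableSpace E] (ρ : Measure (ℝ × E))
    (f : ℝ × E → ℝ) (lam : ℕ → ℝ) (a : ℕ → ℝ × E → ℝ) : Prop :=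
  Summable (fun i => |lam i|) ∧
  Tendsto (fun k => eLpNorm (fun p => f p - ∑ i ∈ Finset.range k, lam i * a i p) 1 ρ)
    atTop (nhds 0)

/-- Membership in the atomic Hardy space `H¹(N)`. -/
def MemH1 {E : Type*} [MetricSpace E] [MeasurableSpace E]
    (μ : Measure E) (f : ℝ × E → ℝ) : Prop :=
  Integrable f (pmeas μ) ∧
  ∃ (lam : ℕ → ℝ) (a : ℕ → ℝ × E → ℝ), (∀ i, IsAtom12 μ (a i)) ∧
    HasL1Decomp (pmeas μ) f lam a

/-- The `H¹(N)` norm: infimum of `Σ |λ_i|` over all atomic decompositions. -/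
def H1norm {E : Type*} [MetricSpace E] [MeasurableSpace E]
    (μ : Measure E) (f : ℝ × E → ℝ) : ℝ :=
  sInf {c | ∃ (lam : ℕ → ℝ) (a : ℕ → ℝ × E → ℝ), (∀ i, IsAtom12 μ (a i)) ∧
    HasL1Decomp (pmeas μ) f lam a ∧ c = ∑' i, |lam i|}

/-- Membership in `H¹_r(X)`: `f ∈ L¹(X,ν)` is the restriction to `X` of some `F ∈ H¹(N)`. -/
def MemH1r {E : Type*} [MetricSpace E] [MeasurableSpace E]
    (μ : Measure E) (f : ℝ × E → ℝ) : Prop :=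
  IntegrableOn f (Xset E) (pmeas μ) ∧
  ∃ F : ℝ × E → ℝ, MemH1 μ F ∧ F =ᵐ[(pmeas μ).restrict (Xset E)] f

/-- The quotient norm on `H¹_r(X)`. -/
def H1rnorm {E : Type*} [MetricSpace E] [MeasurableSpace E]
    (μ : Measure E) (f : ℝ × E → ℝ) : ℝ :=
  sInf {c | ∃ F : ℝ × E → ℝ, MemH1 μ F ∧ F =ᵐ[(pmeas μ).restrict (Xset E)] f ∧
    c = H1norm μ F}

/-- Membership in `H¹_z(X)`: the extension of `f` by zero belongs to `H¹(N)`. -/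
def MemH1z {E : Type*} [MetricSpace E] [MeasurableSpace E]
    (μ : Measure E) (f : ℝ × E → ℝ) : Prop :=
  IntegrableOn f (Xset E) (pmeas μ) ∧ MemH1 μ ((Xset E).indicator f)

/-- The `H¹_z(X)` norm: the `H¹(N)` norm of the zero extension. -/
def H1znorm {E : Type*} [MetricSpace E] [MeasurableSpace E]
    (μ : Measure E) (f : ℝ × E → ℝ) : ℝ :=
  H1norm μ ((Xset E).indicator f)

/-- `μ` is doubling with constant `C_D`, with all balls of positive finite measure. -/
def DoublingWith {E : Type*} [MetricSpace E] [MeasurableSpace E]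
    (μ : Measure E) (C_D : ℝ) : Prop :=
  (∀ (x : E) (r : ℝ), 0 < r → 0 < μ (ball x r) ∧ μ (ball x r) < ⊤) ∧
  (∀ (x : E) (r : ℝ), 0 < r → μ (ball x (2 * r)) ≤ ENNReal.ofReal C_D * μ (ball x r))

/-- The annular regions `B_j(Q)` attached to a parabolic ball `Q = pball c r`:
`B_1(Q) = 4Q ∩ X` and `B_j(Q) = (2^{j+1}Q ∖ 2^jQ) ∩ X` for `j ≥ 2`. -/
def molBall {E : Type*} [MetricSpace E] (c : ℝ × E) (r : ℝ) (j : ℕ) : Set (ℝ × E) :=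
  if j = 1 then pball c (4 * r) ∩ Xset E
  else (pball c (2 ^ (j + 1) * r) \ pball c (2 ^ j * r)) ∩ Xset E

/-- The size estimates with parameter `α` for a function `m` on `X` associated to `Q`:
`‖m‖_{L²(B_j(Q))} ≤ 2^{−jα} ν(2^{j+1}Q ∩ X)^{−1/2}` for all `j ≥ 1`. -/
def MolSize {E : Type*} [MetricSpace E] [MeasurableSpace E]
    (μ : Measure E) (α : ℝ) (c : ℝ × E) (r : ℝ) (m : ℝ × E → ℝ) : Prop :=
  ∀ j : ℕ, 1 ≤ j →
    eLpNorm m 2 ((pmeas μ).restrict (molBall c r j)) ≤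
      ENNReal.ofReal ((2:ℝ) ^ (-(j:ℝ) * α)) *
        (pmeas μ (pball c (2 ^ (j + 1) * r) ∩ Xset E)) ^ (-(1:ℝ)/2)

/-- A type (a) molecule with parameter `α`: associated to a ball `Q ⊆ X` with `4Q ⊆ X`,
satisfying the size estimates and the cancellation `∫_X m dν = 0`. -/
def IsTypeAMolecule {E : Type*} [MetricSpace E] [MeasurableSpace E]
    (μ : Measure E) (α : ℝ) (c : ℝ × E) (r : ℝ) (m : ℝ × E → ℝ) : Prop :=
  0 < r ∧ pball c r ⊆ Xset E ∧ pball c (4 * r) ⊆ Xset E ∧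
  IntegrableOn m (Xset E) (pmeas μ) ∧
  (∫ p in Xset E, m p ∂(pmeas μ)) = 0 ∧
  MolSize μ α c r m

/-- A type (b) molecule with parameter `α`: associated to a ball `Q ⊆ X` with `2Q ⊆ X` and
`4Q ⊄ X`, satisfying the size estimates but no cancellation. -/
def IsTypeBMolecule {E : Type*} [MetricSpace E] [MeasurableSpace E]
    (μ : Measure E) (α : ℝ) (c : ℝ × E) (r : ℝ) (m : ℝ × E → ℝ) : Prop :=
  0 < r ∧ pball c r ⊆ Xset E ∧ pball c (2 * r) ⊆ Xset E ∧ ¬ (pball c (4 * r) ⊆ Xset E) ∧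
  IntegrableOn m (Xset E) (pmeas μ) ∧
  MolSize μ α c r m

/-!
Let `Q = pball c r`, `Q_j = 2^{j+1}Q`, and let `b_j` be the normalized indicator of `Q_j ∩ X`.
On each annulus `B_j(Q)` replace `m` by `m 1_{B_j} - (∫_{B_j} m) b_j`, and hand the mass `N_j` of
`m` beyond `Q_j` on from `b_j` to `b_{j+1}`. By Cauchy–Schwarz and the size estimates,
`|∫_{B_j} m|` and `|N_j|` are `O(2^{-jα})`, so by doubling each piece is `O(2^{-jα})` times a
`(1,2)`-atom supported in `Q_{j+1}`, and the pieces telescope to `m 1_X - (∫_X m) b_1`.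
The leftover `(∫_X m) b_1` vanishes for a type (a) molecule; for a type (b) molecule one more atom
moves it to a set `A ⊆ 8Q` below `X` of comparable measure. This gives an extension of `m` to `N`
with an atomic decomposition whose coefficients sum to `O_{α, C_D}(1)`.
-/

open scoped ENNReal

lemma Xset_eq_prod {E : Type*} : Xset E = Ioi 0 ×ˢ univ := by
  ext p
  simp [Xset]

lemma measurableSet_Xset {E : Type*} [MeasurableSpace E] : MeasurableSet (Xset E) := by
  rw [Xset_eq_prod]
  exact measurableSet_Ioi.prod MeasurableSet.univ

section ParabolicBall

variable {E : Type*} [MetricSpace E] {c : ℝ × E} {r : ℝ}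

lemma pball_eq_prod (hr : 0 < r) :
    pball c r = Ioo (c.1 - r ^ 2) (c.1 + r ^ 2) ×ˢ ball c.2 r := by
  ext p
  simp only [pball, pdist, mem_ofPred_eq, max_lt_iff, Real.sqrt_lt' hr, abs_lt, mem_prod,
    mem_Ioo, mem_ball]
  constructor <;> rintro ⟨⟨h₁, h₂⟩, h₃⟩ <;> exact ⟨⟨by linarith, by linarith⟩, h₃⟩

lemma pball_mono {r₁ r₂ : ℝ} (h : r₁ ≤ r₂) : pball c r₁ ⊆ pball c r₂ :=
  fun _ hp => lt_of_lt_of_le hp h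

lemma mem_pball_self (hr : 0 < r) : c ∈ pball c r := by
  simpa [pball, pdist] using hr

lemma fst_pos_of_pball_subset_Xset (hr : 0 < r) (h : pball c r ⊆ Xset E) : 0 < c.1 :=
  h (mem_pball_self hr)

lemma fst_lt_sq_of_not_pball_subset_Xset (hr : 0 < r) (h : ¬ pball c r ⊆ Xset E) :
    c.1 < r ^ 2 := by
  obtain ⟨p, hp, hpX⟩ := not_subset.1 h
  rw [pball_eq_prod hr] at hp
  have : p.1 ≤ 0 := not_lt.1 hpX
  linarith [hp.1.1]

lemma measurableSet_pball [MeasurableSpace E] [OpensMeasurableSpace E] (hr : 0 < r) :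
    MeasurableSet (pball c r) := by
  rw [pball_eq_prod hr]
  exact measurableSet_Ioo.prod measurableSet_ball

variable [MeasurableSpace E] {μ : Measure E} [SFinite μ]

lemma pmeas_pball (hr : 0 < r) :
    pmeas μ (pball c r) = ENNReal.ofReal (2 * r ^ 2) * μ (ball c.2 r) := by
  rw [pball_eq_prod hr, pmeas, Measure.prod_prod, Real.volume_Ioo]
  ring_nf

/-- At least the upper half `(c.1, c.1 + r²)` of the time interval of `pball c r` lies in `X`. -/
lemma pmeas_pball_le_two_mul_inter_Xset (hr : 0 < r) (hc : 0 < c.1) :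
    pmeas μ (pball c r) ≤ 2 * pmeas μ (pball c r ∩ Xset E) := by
  have hsub : Ioo c.1 (c.1 + r ^ 2) ×ˢ ball c.2 r ⊆ pball c r ∩ Xset E := by
    rw [pball_eq_prod hr, Xset_eq_prod]
    rintro p ⟨⟨h₁, h₂⟩, h₃⟩
    exact ⟨⟨⟨by nlinarith, h₂⟩, h₃⟩, ⟨hc.trans h₁, trivial⟩⟩
  calc pmeas μ (pball c r)
      = 2 * (ENNReal.ofReal (r ^ 2) * μ (ball c.2 r)) := by
        rw [pmeas_pball hr, ENNReal.ofReal_mul zero_le_two, ENNReal.ofReal_ofNat, mul_assoc]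
    _ ≤ 2 * pmeas μ (pball c r ∩ Xset E) := by
        gcongr
        refine le_trans (le_of_eq ?_) (measure_mono hsub)
        rw [pmeas, Measure.prod_prod, Real.volume_Ioo, add_sub_cancel_left]

end ParabolicBall

lemma ENNReal.rpow_neg_half_le_of_le_mul {a b : ℝ≥0∞} {K : ℝ} (hK : 0 < K)
    (h : b ≤ ENNReal.ofReal K * a) (ha : a ≠ ⊤) :
    a ^ (-(1:ℝ)/2) ≤ ENNReal.ofReal (Real.sqrt K) * b ^ (-(1:ℝ)/2) := by
  have hb : (ENNReal.ofReal K * a) ^ (-(1:ℝ)/2) ≤ b ^ (-(1:ℝ)/2) := by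
    rw [neg_div, ENNReal.rpow_neg, ENNReal.rpow_neg]
    exact ENNReal.inv_le_inv.2 (ENNReal.rpow_le_rpow h (by norm_num))
  have hsqrt : ENNReal.ofReal (Real.sqrt K) * ENNReal.ofReal K ^ (-(1:ℝ)/2) = 1 := by
    rw [ENNReal.ofReal_rpow_of_pos hK, ← ENNReal.ofReal_mul (Real.sqrt_nonneg K),
      Real.sqrt_eq_rpow, ← Real.rpow_add hK]
    norm_num
  calc a ^ (-(1:ℝ)/2)
      = ENNReal.ofReal (Real.sqrt K) * (ENNReal.ofReal K * a) ^ (-(1:ℝ)/2) := by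
        rw [ENNReal.mul_rpow_of_ne_top ENNReal.ofReal_ne_top ha, ← mul_assoc, hsqrt, one_mul]
    _ ≤ ENNReal.ofReal (Real.sqrt K) * b ^ (-(1:ℝ)/2) := by gcongr

lemma enorm_toReal_inv {x : ℝ≥0∞} (h₀ : x ≠ 0) (h : x ≠ ⊤) : ‖x.toReal⁻¹‖ₑ = x⁻¹ := by
  rw [Real.enorm_eq_ofReal (by positivity), ENNReal.ofReal_inv_of_pos (ENNReal.toReal_pos h₀ h),
    ENNReal.ofReal_toReal h]

section NormIndicator

variable {α : Type*} [MeasurableSpace α] {ρ : Measure α} {A B : Set α}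

def normIndicator (ρ : Measure α) (A : Set α) : α → ℝ :=
  A.indicator fun _ => (ρ A).toReal⁻¹

lemma support_normIndicator_subset : Function.support (normIndicator ρ A) ⊆ A :=
  support_indicator_subset

lemma integrable_normIndicator (hA : MeasurableSet A) (hA_top : ρ A ≠ ⊤) :
    Integrable (normIndicator ρ A) ρ :=
  (integrableOn_const hA_top).integrable_indicator hA

variable (hA : MeasurableSet A) (hA₀ : ρ A ≠ 0) (hA_top : ρ A ≠ ⊤)
include hA hA₀ hA_top

lemma integral_normIndicator : ∫ x, normIndicator ρ A x ∂ρ = 1 := by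
  rw [normIndicator, integral_indicator_const _ hA, smul_eq_mul, measureReal_def,
    mul_inv_cancel₀ (ENNReal.toReal_ne_zero.2 ⟨hA₀, hA_top⟩)]

lemma eLpNorm_one_normIndicator : eLpNorm (normIndicator ρ A) 1 ρ = 1 := by
  rw [normIndicator, eLpNorm_indicator_const hA one_ne_zero ENNReal.one_ne_top,
    enorm_toReal_inv hA₀ hA_top, ENNReal.toReal_one, div_one, ENNReal.rpow_one,
    ENNReal.inv_mul_cancel hA₀ hA_top]

lemma eLpNorm_two_normIndicator :
    eLpNorm (normIndicator ρ A) 2 ρ = ρ A ^ (-(1:ℝ)/2) := by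
  rw [normIndicator, eLpNorm_indicator_const hA two_ne_zero ENNReal.ofNat_ne_top,
    enorm_toReal_inv hA₀ hA_top, ← ENNReal.rpow_neg_one,
    ← ENNReal.rpow_add _ _ hA₀ hA_top]
  norm_num

lemma eLpNorm_two_normIndicator_le {K : ℝ} (hK : 0 < K) (hB : ρ B ≤ ENNReal.ofReal K * ρ A) :
    eLpNorm (normIndicator ρ A) 2 ρ ≤ ENNReal.ofReal (Real.sqrt K) * ρ B ^ (-(1:ℝ)/2) := by
  rw [eLpNorm_two_normIndicator hA hA₀ hA_top]
  exact ENNReal.rpow_neg_half_le_of_le_mul hK hB hA_top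

end NormIndicator

lemma eLpNorm_one_restrict_le {α : Type*} [MeasurableSpace α] {ρ : Measure α} {A : Set α}
    {f : α → ℝ} (hf : AEStronglyMeasurable f (ρ.restrict A)) :
    eLpNorm f 1 (ρ.restrict A) ≤ eLpNorm f 2 (ρ.restrict A) * ρ A ^ ((1:ℝ)/2) := by
  have := eLpNorm_le_eLpNorm_mul_rpow_measure_univ (p := 1) (q := 2) (by norm_num) hf
  rw [Measure.restrict_apply_univ] at this
  convert this using 3
  norm_num

lemma hasL1Decomp_inv_smul {E : Type*} [MeasurableSpace E] {ρ : Measure (ℝ × E)}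
    {F : ℝ × E → ℝ} {lam : ℕ → ℝ} {g : ℕ → ℝ × E → ℝ} (hlam : ∀ i, lam i ≠ 0)
    (hsum : Summable fun i => |lam i|)
    (htail : Tendsto (fun k => eLpNorm (fun p => F p - ∑ i ∈ Finset.range k, g i p) 1 ρ)
      atTop (nhds 0)) :
    HasL1Decomp ρ F lam (fun i => (lam i)⁻¹ • g i) := by
  refine ⟨hsum, ?_⟩
  simpa only [Pi.smul_apply, smul_eq_mul, mul_inv_cancel_left₀ (hlam _)] using htail

lemma enorm_setIntegral_le_eLpNorm_one {α : Type*} [MeasurableSpace α] {ρ : Measure α}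
    (f : α → ℝ) (S : Set α) : ‖∫ x in S, f x ∂ρ‖ₑ ≤ eLpNorm f 1 (ρ.restrict S) := by
  rw [eLpNorm_one_eq_lintegral_enorm]
  exact enorm_integral_le_lintegral_enorm f

section HardySpace

variable {E : Type*} [MetricSpace E] [MeasurableSpace E] {μ : Measure E}

lemma isAtom12_inv_smul {g : ℝ × E → ℝ} {c : ℝ × E} {R lam : ℝ} (hR : 0 < R) (hlam : 0 < lam)
    (hsupp : Function.support g ⊆ pball c R) (hg : Integrable g (pmeas μ))
    (hg₀ : ∫ p, g p ∂(pmeas μ) = 0)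
    (hg₂ : eLpNorm g 2 (pmeas μ) ≤ ENNReal.ofReal lam * pmeas μ (pball c R) ^ (-(1:ℝ)/2)) :
    IsAtom12 μ (lam⁻¹ • g) := by
  refine ⟨c, R, hR, (Function.support_const_smul_subset _ _).trans hsupp, hg.smul _, ?_, ?_⟩
  · simp only [Pi.smul_apply, integral_smul, hg₀, smul_zero]
  · rw [eLpNorm_const_smul]
    calc ‖lam⁻¹‖ₑ * eLpNorm g 2 (pmeas μ)
        ≤ ‖lam⁻¹‖ₑ * (ENNReal.ofReal lam * pmeas μ (pball c R) ^ (-(1:ℝ)/2)) := by gcongr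
      _ = pmeas μ (pball c R) ^ (-(1:ℝ)/2) := by
        rw [← mul_assoc, Real.enorm_eq_ofReal (by positivity), ← ENNReal.ofReal_mul
          (by positivity), inv_mul_cancel₀ hlam.ne', ENNReal.ofReal_one, one_mul]

lemma memH1_of_hasL1Decomp {F : ℝ × E → ℝ} {lam : ℕ → ℝ} {a : ℕ → ℝ × E → ℝ}
    (hF : Integrable F (pmeas μ)) (ha : ∀ i, IsAtom12 μ (a i))
    (hdec : HasL1Decomp (pmeas μ) F lam a) :
    MemH1 μ F ∧ H1norm μ F ≤ ∑' i, |lam i| := by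
  refine ⟨⟨hF, lam, a, ha, hdec⟩, csInf_le ⟨0, ?_⟩ ⟨lam, a, ha, hdec, rfl⟩⟩
  rintro _ ⟨lam', -, -, -, rfl⟩
  exact tsum_nonneg fun i => abs_nonneg _

lemma H1rnorm_le_H1norm {f F : ℝ × E → ℝ} (hF : MemH1 μ F)
    (hFf : F =ᵐ[(pmeas μ).restrict (Xset E)] f) : H1rnorm μ f ≤ H1norm μ F := by
  refine csInf_le ⟨0, ?_⟩ ⟨F, hF, hFf, rfl⟩
  rintro _ ⟨F', -, -, rfl⟩
  refine Real.sInf_nonneg ?_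
  rintro _ ⟨lam', -, -, -, rfl⟩
  exact tsum_nonneg fun i => abs_nonneg _

end HardySpace

section Dyadic

variable {E : Type*} [MetricSpace E] {c : ℝ × E} {r : ℝ}

/-- The dilate `2^{j+1}Q` of `Q = pball c r`; note the shift of the index. -/
def dyadicBall (c : ℝ × E) (r : ℝ) (j : ℕ) : Set (ℝ × E) := pball c (2 ^ (j + 1) * r)

def dyadicBallX (c : ℝ × E) (r : ℝ) (j : ℕ) : Set (ℝ × E) := dyadicBall c r j ∩ Xset E

/-- The union of the annuli `B_j(Q)`, `j > k`: all of `X` for `k = 0`, and `X ∖ 2^{k+1}Q` for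
`k ≥ 1`. -/
def molTail (c : ℝ × E) (r : ℝ) (k : ℕ) : Set (ℝ × E) := ⋃ i, molBall c r (i + k + 1)

lemma dyadicBall_mono (hr : 0 < r) {i j : ℕ} (h : i ≤ j) : dyadicBall c r i ⊆ dyadicBall c r j :=
  pball_mono (by gcongr; norm_num)

lemma dyadicBallX_subset_dyadicBall (j : ℕ) : dyadicBallX c r j ⊆ dyadicBall c r j :=
  inter_subset_left

lemma molBall_one : molBall c r 1 = dyadicBallX c r 1 := by
  rw [molBall, if_pos rfl, dyadicBallX, dyadicBall]
  norm_num

lemma molBall_add_two (j : ℕ) :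
    molBall c r (j + 2) = (dyadicBall c r (j + 2) \ dyadicBall c r (j + 1)) ∩ Xset E := by
  rw [molBall, if_neg (by omega)]
  rfl

lemma molBall_subset_Xset (j : ℕ) : molBall c r j ⊆ Xset E := by
  rw [molBall]
  split <;> exact inter_subset_right

lemma molBall_subset_dyadicBallX {j : ℕ} (hj : 1 ≤ j) : molBall c r j ⊆ dyadicBallX c r j := by
  obtain ⟨i, rfl⟩ := Nat.exists_eq_add_of_le' hj
  rcases i with _ | i
  · exact (molBall_one).le
  · rw [molBall_add_two]
    exact inter_subset_inter_left _ sdiff_subset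

lemma pairwise_disjoint_molBall (hr : 0 < r) :
    Pairwise (Function.onFun Disjoint fun i => molBall c r (i + 1)) := by
  refine pairwise_disjoint_on _ |>.2 fun i j hij => ?_
  obtain ⟨k, rfl⟩ := Nat.exists_eq_add_of_lt hij
  rw [show i + k + 1 + 1 = k + i + 2 by ring, molBall_add_two]
  refine disjoint_left.2 fun p hpi hpj => hpj.1.2 ?_
  exact dyadicBall_mono hr (by omega) (molBall_subset_dyadicBallX (by omega) hpi).1

lemma iUnion_molBall (hr : 0 < r) : ⋃ i, molBall c r (i + 1) = Xset E := by
  refine subset_antisymm (iUnion_subset fun i => molBall_subset_Xset _) fun p hp => ?_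
  have hex : ∃ n : ℕ, p ∈ dyadicBall c r n := by
    obtain ⟨n, hn⟩ := exists_nat_gt (pdist p c / r)
    refine ⟨n, lt_of_lt_of_le ((div_lt_iff₀ hr).1 hn) ?_⟩
    gcongr
    exact_mod_cast (Nat.lt_two_pow_self.trans (Nat.pow_lt_pow_succ (le_refl 2))).le
  classical
  have hfind := Nat.find_spec hex
  rcases h : Nat.find hex with _ | _ | n <;> rw [h] at hfind
  · exact mem_iUnion.2 ⟨0, by rw [molBall_one]; exact ⟨dyadicBall_mono hr zero_le_one hfind, hp⟩⟩
  · exact mem_iUnion.2 ⟨0, by rw [molBall_one]; exact ⟨hfind, hp⟩⟩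
  · refine mem_iUnion.2 ⟨n + 1, ?_⟩
    rw [molBall_add_two]
    exact ⟨⟨hfind, Nat.find_min hex (by omega)⟩, hp⟩

lemma molTail_zero (hr : 0 < r) : molTail c r 0 = Xset E := iUnion_molBall hr

lemma molTail_eq_union (k : ℕ) : molTail c r k = molBall c r (k + 1) ∪ molTail c r (k + 1) := by
  rw [molTail, molTail, ← union_iUnion_nat_succ fun i => molBall c r (i + k + 1), zero_add]
  simp only [Nat.add_right_comm _ 1 k]
  rfl

lemma disjoint_molBall_molTail (hr : 0 < r) (k : ℕ) :
    Disjoint (molBall c r (k + 1)) (molTail c r (k + 1)) := by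
  refine disjoint_iUnion_right.2 fun i => pairwise_disjoint_molBall hr (i := k) (j := i + k + 1)
    (by omega)

lemma molTail_subset_Xset (k : ℕ) : molTail c r k ⊆ Xset E :=
  iUnion_subset fun _ => molBall_subset_Xset _

lemma indicator_molTail_eq_add (hr : 0 < r) (f : ℝ × E → ℝ) (k : ℕ) :
    (molTail c r k).indicator f =
      (molBall c r (k + 1)).indicator f + (molTail c r (k + 1)).indicator f := by
  rw [molTail_eq_union k, indicator_union_of_disjoint (disjoint_molBall_molTail hr k)]
  rfl

variable [MeasurableSpace E] [OpensMeasurableSpace E]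

lemma measurableSet_dyadicBall (hr : 0 < r) (j : ℕ) : MeasurableSet (dyadicBall c r j) :=
  measurableSet_pball (by positivity)

lemma measurableSet_dyadicBallX (hr : 0 < r) (j : ℕ) : MeasurableSet (dyadicBallX c r j) :=
  (measurableSet_dyadicBall hr j).inter measurableSet_Xset

lemma measurableSet_molBall (hr : 0 < r) (j : ℕ) : MeasurableSet (molBall c r j) := by
  rw [molBall]
  split
  · exact (measurableSet_pball (by positivity)).inter measurableSet_Xset
  · exact ((measurableSet_pball (by positivity)).diff
      (measurableSet_pball (by positivity))).inter measurableSet_Xset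

lemma measurableSet_molTail (hr : 0 < r) (k : ℕ) : MeasurableSet (molTail c r k) :=
  MeasurableSet.iUnion fun _ => measurableSet_molBall hr _

end Dyadic

section Doubling

variable {E : Type*} [MetricSpace E] [MeasurableSpace E] {μ : Measure E} {C_D : ℝ}
  {c : ℝ × E} {r : ℝ} {A : Set (ℝ × E)}

lemma DoublingWith.sigmaFinite (hd : DoublingWith μ C_D) (y : E) : SigmaFinite μ := by
  refine Measure.sigmaFinite_of_countable (S := range fun n : ℕ => ball y (n + 1))
    (countable_range _) ?_ ?_
  · rintro _ ⟨n, rfl⟩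
    exact (hd.1 y (n + 1) (by positivity)).2
  · refine eq_univ_of_forall fun x => mem_sUnion.2 ?_
    obtain ⟨n, hn⟩ := exists_nat_gt (dist x y)
    exact ⟨_, ⟨n, rfl⟩, mem_ball.2 (by linarith)⟩

lemma DoublingWith.pmeas_pball_two_mul_le (hd : DoublingWith μ C_D) (hr : 0 < r) :
    pmeas μ (pball c (2 * r)) ≤ ENNReal.ofReal (4 * C_D) * pmeas μ (pball c r) := by
  have := hd.sigmaFinite c.2
  rw [pmeas_pball (by positivity), pmeas_pball hr]
  calc ENNReal.ofReal (2 * (2 * r) ^ 2) * μ (ball c.2 (2 * r))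
      ≤ ENNReal.ofReal (2 * (2 * r) ^ 2) * (ENNReal.ofReal C_D * μ (ball c.2 r)) := by
        gcongr
        exact hd.2 c.2 r hr
    _ = ENNReal.ofReal (4 * C_D) * (ENNReal.ofReal (2 * r ^ 2) * μ (ball c.2 r)) := by
        rw [ENNReal.ofReal_mul (by norm_num : (0:ℝ) ≤ 4),
          show 2 * (2 * r) ^ 2 = 4 * (2 * r ^ 2) by ring,
          ENNReal.ofReal_mul (by norm_num : (0:ℝ) ≤ 4)]
        ring

variable (hd : DoublingWith μ C_D) (hr : 0 < r)
include hd hr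

lemma pmeas_dyadicBall_lt_top (j : ℕ) : pmeas μ (dyadicBall c r j) < ⊤ := by
  have := hd.sigmaFinite c.2
  rw [dyadicBall, pmeas_pball (by positivity)]
  exact ENNReal.mul_lt_top ENNReal.ofReal_lt_top (hd.1 c.2 _ (by positivity)).2

lemma pmeas_dyadicBallX_lt_top (j : ℕ) : pmeas μ (dyadicBallX c r j) < ⊤ :=
  (measure_mono (dyadicBallX_subset_dyadicBall j)).trans_lt (pmeas_dyadicBall_lt_top hd hr j)

lemma pmeas_ne_top_of_subset_dyadicBall (hA₂ : A ⊆ dyadicBall c r 2) : pmeas μ A ≠ ⊤ :=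
  ((measure_mono hA₂).trans_lt (pmeas_dyadicBall_lt_top hd hr 2)).ne

variable (hQ : pball c r ⊆ Xset E)
include hQ

lemma pmeas_dyadicBall_le_two_mul (j : ℕ) :
    pmeas μ (dyadicBall c r j) ≤ 2 * pmeas μ (dyadicBallX c r j) := by
  have := hd.sigmaFinite c.2
  exact pmeas_pball_le_two_mul_inter_Xset (by positivity) (fst_pos_of_pball_subset_Xset hr hQ)

lemma pmeas_dyadicBallX_pos (j : ℕ) : 0 < pmeas μ (dyadicBallX c r j) := by
  have := hd.sigmaFinite c.2
  have hball : 0 < pmeas μ (dyadicBall c r j) := by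
    rw [dyadicBall, pmeas_pball (by positivity)]
    exact ENNReal.mul_pos (ENNReal.ofReal_pos.2 (by positivity)).ne'
      (hd.1 c.2 _ (by positivity)).1.ne'
  exact (ENNReal.mul_pos_iff.1 (hball.trans_le (pmeas_dyadicBall_le_two_mul hd hr hQ j))).2

lemma pmeas_dyadicBall_succ_le (j : ℕ) :
    pmeas μ (dyadicBall c r (j + 1)) ≤ ENNReal.ofReal (8 * C_D) * pmeas μ (dyadicBallX c r j) := by
  calc pmeas μ (dyadicBall c r (j + 1))
      ≤ ENNReal.ofReal (4 * C_D) * pmeas μ (dyadicBall c r j) := by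
        rw [dyadicBall, pow_succ, mul_comm _ (2:ℝ), mul_assoc]
        exact hd.pmeas_pball_two_mul_le (by positivity)
    _ ≤ ENNReal.ofReal (4 * C_D) * (2 * pmeas μ (dyadicBallX c r j)) := by
        gcongr
        exact pmeas_dyadicBall_le_two_mul hd hr hQ j
    _ = ENNReal.ofReal (8 * C_D) * pmeas μ (dyadicBallX c r j) := by
        rw [show 8 * C_D = 2 * (4 * C_D) by ring, ENNReal.ofReal_mul zero_le_two,
          ENNReal.ofReal_ofNat]
        ring

lemma pmeas_ne_zero_of_dyadicBall_le
    (hAν : pmeas μ (dyadicBall c r 2) ≤ ENNReal.ofReal (8 * C_D) * pmeas μ A) :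
    pmeas μ A ≠ 0 := by
  intro h₀
  rw [h₀, mul_zero, nonpos_iff_eq_zero] at hAν
  exact (pmeas_dyadicBallX_pos hd hr hQ 2).ne'
    (measure_mono_null (dyadicBallX_subset_dyadicBall 2) hAν)

end Doubling

def decay (α : ℝ) : ℝ := 2 ^ (-α)

def tailConst (α : ℝ) : ℝ := decay α / (1 - decay α)

lemma decay_pos (α : ℝ) : 0 < decay α := Real.rpow_pos_of_pos two_pos _

lemma decay_lt_one {α : ℝ} (hα : 0 < α) : decay α < 1 :=
  Real.rpow_lt_one_of_one_lt_of_neg one_lt_two (neg_neg_of_pos hα)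

lemma tailConst_pos {α : ℝ} (hα : 0 < α) : 0 < tailConst α :=
  div_pos (decay_pos α) (sub_pos.2 (decay_lt_one hα))

lemma two_rpow_neg_mul_eq_decay_pow (α : ℝ) (j : ℕ) : (2:ℝ) ^ (-(j:ℝ) * α) = decay α ^ j := by
  rw [decay, ← Real.rpow_natCast, ← Real.rpow_mul zero_le_two]
  ring_nf

lemma hasSum_decay_pow {α : ℝ} (hα : 0 < α) (k : ℕ) :
    HasSum (fun i => decay α ^ (i + k + 1)) (tailConst α * decay α ^ k) := by
  have e₁ : (fun i => decay α ^ (i + k + 1)) = fun i => decay α ^ (k + 1) * decay α ^ i := by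
    funext i
    ring
  have e₂ : tailConst α * decay α ^ k = decay α ^ (k + 1) * (1 - decay α)⁻¹ := by
    unfold tailConst
    ring
  rw [e₁, e₂]
  exact (hasSum_geometric_of_lt_one (decay_pos α).le (decay_lt_one hα)).mul_left _

section MoleculeSize

variable {E : Type*} [MetricSpace E] [MeasurableSpace E] {μ : Measure E} {C_D α : ℝ}
  {m : ℝ × E → ℝ} {c : ℝ × E} {r : ℝ}

lemma MolSize.eLpNorm_two_le (hsize : MolSize μ α c r m) {j : ℕ} (hj : 1 ≤ j) :
    eLpNorm m 2 ((pmeas μ).restrict (molBall c r j)) ≤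
      ENNReal.ofReal (decay α ^ j) * pmeas μ (dyadicBallX c r j) ^ (-(1:ℝ)/2) := by
  rw [← two_rpow_neg_mul_eq_decay_pow]
  exact hsize j hj

variable (hd : DoublingWith μ C_D) (hr : 0 < r) (hQ : pball c r ⊆ Xset E)
  (hm : IntegrableOn m (Xset E) (pmeas μ)) (hsize : MolSize μ α c r m)
include hd hr hQ hm hsize

lemma MolSize.eLpNorm_one_molBall_le {j : ℕ} (hj : 1 ≤ j) :
    eLpNorm m 1 ((pmeas μ).restrict (molBall c r j)) ≤ ENNReal.ofReal (decay α ^ j) := by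
  set V := pmeas μ (dyadicBallX c r j)
  calc eLpNorm m 1 ((pmeas μ).restrict (molBall c r j))
      ≤ eLpNorm m 2 ((pmeas μ).restrict (molBall c r j)) *
          pmeas μ (molBall c r j) ^ ((1:ℝ)/2) :=
        eLpNorm_one_restrict_le (hm.mono_set (molBall_subset_Xset j)).aestronglyMeasurable
    _ ≤ ENNReal.ofReal (decay α ^ j) * V ^ (-(1:ℝ)/2) * V ^ ((1:ℝ)/2) := by
        gcongr
        · exact hsize.eLpNorm_two_le hj
        · exact measure_mono (molBall_subset_dyadicBallX hj)
    _ = ENNReal.ofReal (decay α ^ j) := by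
        rw [mul_assoc, ← ENNReal.rpow_add _ _ (pmeas_dyadicBallX_pos hd hr hQ j).ne'
          (pmeas_dyadicBallX_lt_top hd hr j).ne]
        norm_num

lemma MolSize.eLpNorm_one_molTail_le [OpensMeasurableSpace E] (hα : 0 < α) (k : ℕ) :
    eLpNorm m 1 ((pmeas μ).restrict (molTail c r k)) ≤
      ENNReal.ofReal (tailConst α * decay α ^ k) := by
  have hτ := hasSum_decay_pow hα k
  rw [eLpNorm_one_eq_lintegral_enorm, molTail, lintegral_iUnion
    (fun i => measurableSet_molBall hr _)
    ((pairwise_disjoint_molBall hr).comp_of_injective (add_left_injective k)),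
    ← hτ.tsum_eq,
    ENNReal.ofReal_tsum_of_nonneg (fun i => pow_nonneg (decay_pos α).le _) hτ.summable]
  refine ENNReal.tsum_le_tsum fun i => ?_
  rw [← eLpNorm_one_eq_lintegral_enorm]
  exact hsize.eLpNorm_one_molBall_le hd hr hQ hm (by omega)

end MoleculeSize

def moleculeConst (α C_D : ℝ) : ℝ := (2 + 2 * tailConst α) * Real.sqrt (8 * C_D)

lemma moleculeConst_pos {α C_D : ℝ} (hα : 0 < α) (hCD : 0 < C_D) : 0 < moleculeConst α C_D :=
  mul_pos (by linarith [tailConst_pos hα]) (Real.sqrt_pos.2 (by linarith))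

section MoleculePieces

variable {E : Type*} [MetricSpace E] [MeasurableSpace E] {μ : Measure E} {C_D α : ℝ}
  {m : ℝ × E → ℝ} {c : ℝ × E} {r : ℝ} {A : Set (ℝ × E)}

def dyadicBump (μ : Measure E) (c : ℝ × E) (r : ℝ) (j : ℕ) : ℝ × E → ℝ :=
  normIndicator (pmeas μ) (dyadicBallX c r j)

/-- Piece `j + 1` replaces `m` on `B_{j+1}(Q)` by a function of mean zero and hands the mass of
`m` beyond `2^{j+2}Q` on from `dyadicBump (j+1)` to `dyadicBump (j+2)`; piece `0` moves the total
mass of `m` from the corrector set `A` to `dyadicBump 1`. -/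
def moleculePiece (μ : Measure E) (m : ℝ × E → ℝ) (c : ℝ × E) (r : ℝ) (A : Set (ℝ × E)) :
    ℕ → ℝ × E → ℝ
  | 0 => (∫ p in Xset E, m p ∂(pmeas μ)) • (dyadicBump μ c r 1 - normIndicator (pmeas μ) A)
  | j + 1 => (molBall c r (j + 1)).indicator m
      - (∫ p in molBall c r (j + 1), m p ∂(pmeas μ)) • dyadicBump μ c r (j + 1)
      + (∫ p in molTail c r (j + 1), m p ∂(pmeas μ)) •
          (dyadicBump μ c r (j + 2) - dyadicBump μ c r (j + 1))

def moleculeRemainder (μ : Measure E) (m : ℝ × E → ℝ) (c : ℝ × E) (r : ℝ) (k : ℕ) :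
    ℝ × E → ℝ :=
  (molTail c r k).indicator m - (∫ p in molTail c r k, m p ∂(pmeas μ)) • dyadicBump μ c r (k + 1)

lemma support_dyadicBump_subset (hr : 0 < r) {i j : ℕ} (hij : i ≤ j) :
    Function.support (dyadicBump μ c r i) ⊆ dyadicBall c r j :=
  support_normIndicator_subset.trans
    ((dyadicBallX_subset_dyadicBall i).trans (dyadicBall_mono hr hij))

lemma support_moleculePiece_zero (hr : 0 < r) (hA₂ : A ⊆ dyadicBall c r 2) :
    Function.support (moleculePiece μ m c r A 0) ⊆ dyadicBall c r 2 :=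
  (Function.support_const_smul_subset _ _).trans <| (Function.support_sub _ _).trans <|
    union_subset (support_dyadicBump_subset hr one_le_two)
      (support_normIndicator_subset.trans hA₂)

lemma support_moleculePiece_succ (hr : 0 < r) (j : ℕ) :
    Function.support (moleculePiece μ m c r A (j + 1)) ⊆ dyadicBall c r (j + 2) := by
  have hM : molBall c r (j + 1) ⊆ dyadicBall c r (j + 2) :=
    (molBall_subset_dyadicBallX (by omega)).trans
      ((dyadicBallX_subset_dyadicBall _).trans (dyadicBall_mono hr (by omega)))
  refine (Function.support_add _ _).trans (union_subset ?_ ?_)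
  · exact (Function.support_sub _ _).trans (union_subset (support_indicator_subset.trans hM)
      ((Function.support_const_smul_subset _ _).trans (support_dyadicBump_subset hr (by omega))))
  · exact (Function.support_const_smul_subset _ _).trans ((Function.support_sub _ _).trans
      (union_subset (support_dyadicBump_subset hr le_rfl)
        (support_dyadicBump_subset hr (by omega))))

variable [OpensMeasurableSpace E] (hd : DoublingWith μ C_D) (hr : 0 < r)
  (hQ : pball c r ⊆ Xset E) (hm : IntegrableOn m (Xset E) (pmeas μ))

include hd hr in
lemma integrable_dyadicBump (j : ℕ) :
    Integrable (dyadicBump μ c r j) (pmeas μ) :=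
  integrable_normIndicator (measurableSet_dyadicBallX hr j) (pmeas_dyadicBallX_lt_top hd hr j).ne

include hd hr hQ

lemma integral_dyadicBump (j : ℕ) : ∫ p, dyadicBump μ c r j p ∂(pmeas μ) = 1 :=
  integral_normIndicator (measurableSet_dyadicBallX hr j) (pmeas_dyadicBallX_pos hd hr hQ j).ne'
    (pmeas_dyadicBallX_lt_top hd hr j).ne

lemma eLpNorm_two_dyadicBump_le {i j : ℕ} (hij : i ≤ j) :
    eLpNorm (dyadicBump μ c r j) 2 (pmeas μ) ≤ pmeas μ (dyadicBallX c r i) ^ (-(1:ℝ)/2) := by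
  have h := eLpNorm_two_normIndicator_le (measurableSet_dyadicBallX hr j)
    (pmeas_dyadicBallX_pos hd hr hQ j).ne' (pmeas_dyadicBallX_lt_top hd hr j).ne one_pos
    (B := dyadicBallX c r i) (by
      rw [ENNReal.ofReal_one, one_mul]
      exact measure_mono (inter_subset_inter_left _ (dyadicBall_mono hr hij)))
  simpa [dyadicBump] using h

variable (hA : MeasurableSet A) (hA₂ : A ⊆ dyadicBall c r 2)
  (hAν : pmeas μ (dyadicBall c r 2) ≤ ENNReal.ofReal (8 * C_D) * pmeas μ A)

omit hQ in
include hm hA hA₂ in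
lemma integrable_moleculePiece (j : ℕ) : Integrable (moleculePiece μ m c r A j) (pmeas μ) := by
  cases j with
  | zero =>
    exact ((integrable_dyadicBump hd hr 1).sub (integrable_normIndicator hA
      (pmeas_ne_top_of_subset_dyadicBall hd hr hA₂))).smul _
  | succ j =>
    exact (((hm.mono_set (molBall_subset_Xset _)).integrable_indicator
      (measurableSet_molBall hr _)).sub ((integrable_dyadicBump hd hr _).smul _)).add
      (((integrable_dyadicBump hd hr _).sub (integrable_dyadicBump hd hr _)).smul _)

include hm hA hA₂ hAν in
lemma integral_moleculePiece (j : ℕ) : ∫ p, moleculePiece μ m c r A j p ∂(pmeas μ) = 0 := by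
  cases j with
  | zero =>
    rw [moleculePiece, Pi.smul_def, integral_smul, integral_sub'
      (integrable_dyadicBump hd hr 1) (integrable_normIndicator hA
      (pmeas_ne_top_of_subset_dyadicBall hd hr hA₂)), integral_dyadicBump hd hr hQ,
      integral_normIndicator hA (pmeas_ne_zero_of_dyadicBall_le hd hr hQ hAν)
      (pmeas_ne_top_of_subset_dyadicBall hd hr hA₂), sub_self, smul_zero]
  | succ j =>
    have hM := (hm.mono_set (molBall_subset_Xset (c := c) (j + 1))).integrable_indicator
      (measurableSet_molBall hr _)
    have hb := integrable_dyadicBump hd hr (c := c) (j + 1)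
    have hb' := integrable_dyadicBump hd hr (c := c) (j + 2)
    rw [moleculePiece, integral_add' (hM.sub (hb.smul _)) ((hb'.sub hb).smul _),
      integral_sub' hM (hb.smul _), Pi.smul_def, Pi.smul_def, integral_smul, integral_smul,
      integral_sub' hb' hb, integral_indicator (measurableSet_molBall hr _),
      integral_dyadicBump hd hr hQ, integral_dyadicBump hd hr hQ, smul_eq_mul, smul_eq_mul]
    ring

variable (hsize : MolSize μ α c r m) (hα : 0 < α) (hCD : 0 < C_D)

include hm hA hA₂ hAν hsize hα hCD in
lemma eLpNorm_moleculePiece_zero_le :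
    eLpNorm (moleculePiece μ m c r A 0) 2 (pmeas μ) ≤
      ENNReal.ofReal (moleculeConst α C_D) * pmeas μ (dyadicBall c r 2) ^ (-(1:ℝ)/2) := by
  set V := pmeas μ (dyadicBall c r 2) ^ (-(1:ℝ)/2)
  set K := Real.sqrt (8 * C_D)
  have hA_top := pmeas_ne_top_of_subset_dyadicBall hd hr hA₂
  have hT : ‖∫ p in Xset E, m p ∂(pmeas μ)‖ₑ ≤ ENNReal.ofReal (tailConst α) := by
    rw [← molTail_zero hr (c := c)]
    simpa using (enorm_setIntegral_le_eLpNorm_one m _).trans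
      (hsize.eLpNorm_one_molTail_le hd hr hQ hm hα 0)
  have hb : eLpNorm (dyadicBump μ c r 1) 2 (pmeas μ) ≤ ENNReal.ofReal K * V :=
    eLpNorm_two_normIndicator_le (measurableSet_dyadicBallX hr 1)
      (pmeas_dyadicBallX_pos hd hr hQ 1).ne' (pmeas_dyadicBallX_lt_top hd hr 1).ne
      (by positivity) (pmeas_dyadicBall_succ_le hd hr hQ 1)
  have hw : eLpNorm (normIndicator (pmeas μ) A) 2 (pmeas μ) ≤ ENNReal.ofReal K * V :=
    eLpNorm_two_normIndicator_le hA (pmeas_ne_zero_of_dyadicBall_le hd hr hQ hAν) hA_top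
      (by positivity) hAν
  calc eLpNorm (moleculePiece μ m c r A 0) 2 (pmeas μ)
      = ‖∫ p in Xset E, m p ∂(pmeas μ)‖ₑ *
          eLpNorm (dyadicBump μ c r 1 - normIndicator (pmeas μ) A) 2 (pmeas μ) :=
        eLpNorm_const_smul _ _ _ _
    _ ≤ ENNReal.ofReal (tailConst α) * (ENNReal.ofReal K * V + ENNReal.ofReal K * V) := by
        gcongr
        exact (eLpNorm_sub_le (integrable_dyadicBump hd hr 1).aestronglyMeasurable
          (integrable_normIndicator hA hA_top).aestronglyMeasurable one_le_two).trans
          (add_le_add hb hw)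
    _ = ENNReal.ofReal (2 * tailConst α * K) * V := by
        rw [ENNReal.ofReal_mul (by linarith [tailConst_pos hα]), ENNReal.ofReal_mul zero_le_two,
          ENNReal.ofReal_ofNat]
        ring
    _ ≤ ENNReal.ofReal (moleculeConst α C_D) * V := by
        gcongr
        rw [moleculeConst]
        nlinarith [Real.sqrt_nonneg (8 * C_D)]

include hm hsize hα in
lemma eLpNorm_moleculePiece_succ_le (j : ℕ) :
    eLpNorm (moleculePiece μ m c r A (j + 1)) 2 (pmeas μ) ≤
      ENNReal.ofReal ((2 + 2 * tailConst α) * decay α ^ (j + 1)) *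
        pmeas μ (dyadicBallX c r (j + 1)) ^ (-(1:ℝ)/2) := by
  set V := pmeas μ (dyadicBallX c r (j + 1)) ^ (-(1:ℝ)/2)
  set τ := decay α ^ (j + 1)
  set I := ∫ p in molBall c r (j + 1), m p ∂(pmeas μ)
  set N := ∫ p in molTail c r (j + 1), m p ∂(pmeas μ)
  have hMint := (hm.mono_set (molBall_subset_Xset (c := c) (j + 1))).integrable_indicator
    (measurableSet_molBall hr _)
  have hbint := integrable_dyadicBump hd hr (c := c) (j + 1)
  have hbint' := integrable_dyadicBump hd hr (c := c) (j + 2)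
  have hM : eLpNorm ((molBall c r (j + 1)).indicator m) 2 (pmeas μ) ≤ ENNReal.ofReal τ * V := by
    rw [eLpNorm_indicator_eq_eLpNorm_restrict (measurableSet_molBall hr _)]
    exact hsize.eLpNorm_two_le (by omega)
  have hI : ‖I‖ₑ ≤ ENNReal.ofReal τ := (enorm_setIntegral_le_eLpNorm_one m _).trans
    (hsize.eLpNorm_one_molBall_le hd hr hQ hm (by omega))
  have hN : ‖N‖ₑ ≤ ENNReal.ofReal (tailConst α * τ) := (enorm_setIntegral_le_eLpNorm_one m _).trans
    (hsize.eLpNorm_one_molTail_le hd hr hQ hm hα _)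
  have hb : eLpNorm (dyadicBump μ c r (j + 1)) 2 (pmeas μ) ≤ V :=
    eLpNorm_two_dyadicBump_le hd hr hQ le_rfl
  have hb' : eLpNorm (dyadicBump μ c r (j + 2)) 2 (pmeas μ) ≤ V :=
    eLpNorm_two_dyadicBump_le hd hr hQ (by omega)
  calc eLpNorm (moleculePiece μ m c r A (j + 1)) 2 (pmeas μ)
      ≤ eLpNorm ((molBall c r (j + 1)).indicator m) 2 (pmeas μ)
          + ‖I‖ₑ * eLpNorm (dyadicBump μ c r (j + 1)) 2 (pmeas μ)
          + ‖N‖ₑ * (eLpNorm (dyadicBump μ c r (j + 2)) 2 (pmeas μ)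
            + eLpNorm (dyadicBump μ c r (j + 1)) 2 (pmeas μ)) := by
        refine (eLpNorm_add_le (hMint.sub (hbint.smul _)).aestronglyMeasurable
          ((hbint'.sub hbint).smul _).aestronglyMeasurable one_le_two).trans (add_le_add ?_ ?_)
        · rw [← eLpNorm_const_smul]
          exact eLpNorm_sub_le hMint.aestronglyMeasurable (hbint.smul _).aestronglyMeasurable
            one_le_two
        · rw [eLpNorm_const_smul]
          gcongr
          exact eLpNorm_sub_le hbint'.aestronglyMeasurable hbint.aestronglyMeasurable one_le_two
    _ ≤ ENNReal.ofReal τ * V + ENNReal.ofReal τ * V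
          + ENNReal.ofReal (tailConst α * τ) * (V + V) := by
        gcongr
    _ = ENNReal.ofReal ((2 + 2 * tailConst α) * τ) * V := by
        have hτ : 0 ≤ τ := pow_nonneg (decay_pos α).le _
        rw [show (2 + 2 * tailConst α) * τ = τ + τ + 2 * (tailConst α * τ) by ring,
          ENNReal.ofReal_add (by positivity) (by nlinarith [tailConst_pos hα]),
          ENNReal.ofReal_add hτ hτ, ENNReal.ofReal_mul zero_le_two, ENNReal.ofReal_ofNat]
        ring

include hm hA hA₂ hAν hsize hα hCD in
lemma isAtom12_moleculePiece (j : ℕ) :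
    IsAtom12 μ ((moleculeConst α C_D * decay α ^ j)⁻¹ • moleculePiece μ m c r A j) := by
  have hΛ := mul_pos (moleculeConst_pos hα hCD) (pow_pos (decay_pos α) j)
  have hint := integrable_moleculePiece hd hr hm hA hA₂ j
  have hzero := integral_moleculePiece hd hr hQ hm hA hA₂ hAν j
  cases j with
  | zero =>
    refine isAtom12_inv_smul (R := 2 ^ (2 + 1) * r) (by positivity) hΛ
      (support_moleculePiece_zero hr hA₂) hint hzero ?_
    rw [pow_zero, mul_one]
    exact eLpNorm_moleculePiece_zero_le hd hr hQ hm hA hA₂ hAν hsize hα hCD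
  | succ j =>
    refine isAtom12_inv_smul (R := 2 ^ (j + 2 + 1) * r) (by positivity) hΛ
      (support_moleculePiece_succ hr j) hint hzero ?_
    refine (eLpNorm_moleculePiece_succ_le hd hr hQ hm hsize hα j).trans ?_
    calc ENNReal.ofReal ((2 + 2 * tailConst α) * decay α ^ (j + 1)) *
          pmeas μ (dyadicBallX c r (j + 1)) ^ (-(1:ℝ)/2)
        ≤ ENNReal.ofReal ((2 + 2 * tailConst α) * decay α ^ (j + 1)) *
          (ENNReal.ofReal (Real.sqrt (8 * C_D)) *
            pmeas μ (dyadicBall c r (j + 2)) ^ (-(1:ℝ)/2)) := by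
          gcongr
          exact ENNReal.rpow_neg_half_le_of_le_mul (by positivity)
            (pmeas_dyadicBall_succ_le hd hr hQ (j + 1)) (pmeas_dyadicBallX_lt_top hd hr _).ne
      _ = ENNReal.ofReal (moleculeConst α C_D * decay α ^ (j + 1)) *
          pmeas μ (pball c (2 ^ (j + 2 + 1) * r)) ^ (-(1:ℝ)/2) := by
          have hpos : 0 ≤ (2 + 2 * tailConst α) * decay α ^ (j + 1) :=
            mul_nonneg (by linarith [tailConst_pos hα]) (pow_nonneg (decay_pos α).le _)
          rw [← mul_assoc, ← ENNReal.ofReal_mul hpos, moleculeConst,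
            mul_right_comm _ (decay α ^ (j + 1))]
          rfl

end MoleculePieces

section MoleculeDecomposition

variable {E : Type*} [MetricSpace E] [MeasurableSpace E] [OpensMeasurableSpace E]
  {μ : Measure E} {C_D α : ℝ} {m : ℝ × E → ℝ} {c : ℝ × E} {r : ℝ} {A : Set (ℝ × E)}

lemma setIntegral_molTail_eq_add (hr : 0 < r) (hm : IntegrableOn m (Xset E) (pmeas μ))
    (k : ℕ) :
    ∫ p in molTail c r k, m p ∂(pmeas μ) =
      ∫ p in molBall c r (k + 1), m p ∂(pmeas μ) + ∫ p in molTail c r (k + 1), m p ∂(pmeas μ) := by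
  rw [molTail_eq_union k]
  exact setIntegral_union (disjoint_molBall_molTail hr k) (measurableSet_molTail hr _)
    (hm.mono_set (molBall_subset_Xset _)) (hm.mono_set (molTail_subset_Xset _))

lemma sum_range_moleculePiece (hr : 0 < r) (hm : IntegrableOn m (Xset E) (pmeas μ)) (K : ℕ)
    (p : ℝ × E) :
    ∑ i ∈ Finset.range (K + 1), moleculePiece μ m c r A i p =
      (Xset E).indicator m p - (∫ q in Xset E, m q ∂(pmeas μ)) * normIndicator (pmeas μ) A p
        - moleculeRemainder μ m c r K p := by
  induction K with
  | zero =>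
    rw [Finset.sum_range_one, moleculeRemainder, molTail_zero hr, moleculePiece]
    simp only [Pi.sub_apply, Pi.smul_apply, smul_eq_mul]
    ring
  | succ K ih =>
    rw [Finset.sum_range_succ, ih, moleculeRemainder, moleculeRemainder, moleculePiece,
      indicator_molTail_eq_add hr m K, setIntegral_molTail_eq_add hr hm K]
    simp only [Pi.add_apply, Pi.sub_apply, Pi.smul_apply, smul_eq_mul]
    ring

variable (hd : DoublingWith μ C_D) (hr : 0 < r) (hQ : pball c r ⊆ Xset E)
  (hm : IntegrableOn m (Xset E) (pmeas μ)) (hsize : MolSize μ α c r m) (hα : 0 < α)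
include hd hr hQ hm hsize hα

lemma eLpNorm_moleculeRemainder_le (K : ℕ) :
    eLpNorm (moleculeRemainder μ m c r K) 1 (pmeas μ) ≤
      ENNReal.ofReal (2 * (tailConst α * decay α ^ K)) := by
  have htail := hsize.eLpNorm_one_molTail_le hd hr hQ hm hα K
  have hb := integrable_dyadicBump hd hr (c := c) (K + 1)
  calc eLpNorm (moleculeRemainder μ m c r K) 1 (pmeas μ)
      ≤ eLpNorm m 1 ((pmeas μ).restrict (molTail c r K))
          + ‖∫ p in molTail c r K, m p ∂(pmeas μ)‖ₑ *
            eLpNorm (dyadicBump μ c r (K + 1)) 1 (pmeas μ) := by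
        rw [← eLpNorm_indicator_eq_eLpNorm_restrict (measurableSet_molTail hr K),
          ← eLpNorm_const_smul]
        exact eLpNorm_sub_le ((hm.mono_set (molTail_subset_Xset K)).integrable_indicator
          (measurableSet_molTail hr K)).aestronglyMeasurable (hb.smul _).aestronglyMeasurable
          le_rfl
    _ ≤ ENNReal.ofReal (tailConst α * decay α ^ K)
          + ENNReal.ofReal (tailConst α * decay α ^ K) := by
        rw [dyadicBump, eLpNorm_one_normIndicator (measurableSet_dyadicBallX hr _)
          (pmeas_dyadicBallX_pos hd hr hQ _).ne' (pmeas_dyadicBallX_lt_top hd hr _).ne, mul_one]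
        exact add_le_add htail ((enorm_setIntegral_le_eLpNorm_one m _).trans htail)
    _ = ENNReal.ofReal (2 * (tailConst α * decay α ^ K)) := by
        have := mul_pos (tailConst_pos hα) (pow_pos (decay_pos α) K)
        rw [two_mul, ENNReal.ofReal_add this.le this.le]

lemma tendsto_eLpNorm_sub_sum_moleculePiece :
    Tendsto (fun k => eLpNorm (fun p => ((Xset E).indicator m p
        - (∫ q in Xset E, m q ∂(pmeas μ)) * normIndicator (pmeas μ) A p)
        - ∑ i ∈ Finset.range k, moleculePiece μ m c r A i p) 1 (pmeas μ)) atTop (nhds 0) := by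
  rw [← tendsto_add_atTop_iff_nat 1]
  simp_rw [sum_range_moleculePiece hr hm, sub_sub_cancel]
  have hlim :
      Tendsto (fun K => ENNReal.ofReal (2 * (tailConst α * decay α ^ K))) atTop (nhds 0) := by
    rw [← ENNReal.ofReal_zero]
    refine ENNReal.tendsto_ofReal ?_
    simpa using ((tendsto_pow_atTop_nhds_zero_of_lt_one (decay_pos α).le
      (decay_lt_one hα)).const_mul (tailConst α)).const_mul 2
  exact tendsto_of_tendsto_of_tendsto_of_le_of_le tendsto_const_nhds hlim (fun _ => zero_le)
    fun K => eLpNorm_moleculeRemainder_le hd hr hQ hm hsize hα K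

/-- `∑ j, moleculeConst α C_D * decay α ^ j`, the total of the atom coefficients. -/
def moleculeBound (α C_D : ℝ) : ℝ := moleculeConst α C_D * (1 - decay α)⁻¹

omit hd hr hQ hm hsize in
lemma moleculeBound_pos (hCD : 0 < C_D) : 0 < moleculeBound α C_D :=
  mul_pos (moleculeConst_pos hα hCD) (inv_pos.2 (sub_pos.2 (decay_lt_one hα)))

theorem memH1r_of_molSize (hCD : 0 < C_D) (hA : MeasurableSet A) (hA₂ : A ⊆ dyadicBall c r 2)
    (hAν : pmeas μ (dyadicBall c r 2) ≤ ENNReal.ofReal (8 * C_D) * pmeas μ A)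
    (hAX : ∫ p in Xset E, m p ∂(pmeas μ) = 0 ∨ Disjoint A (Xset E)) :
    MemH1r μ m ∧ H1rnorm μ m ≤ moleculeBound α C_D := by
  set T := ∫ p in Xset E, m p ∂(pmeas μ)
  set F : ℝ × E → ℝ := fun p => (Xset E).indicator m p - T * normIndicator (pmeas μ) A p
  have hF : Integrable F (pmeas μ) := (hm.integrable_indicator measurableSet_Xset).sub
    ((integrable_normIndicator hA (pmeas_ne_top_of_subset_dyadicBall hd hr hA₂)).const_mul T)
  have hFm : F =ᵐ[(pmeas μ).restrict (Xset E)] m := by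
    filter_upwards [ae_restrict_mem measurableSet_Xset] with p hp
    rcases hAX with hT | hAX
    · simp [F, hT, indicator_of_mem hp]
    · simp [F, normIndicator, indicator_of_mem hp,
        indicator_of_notMem (hAX.notMem_of_mem_right hp)]
  have hlam : ∀ j, 0 < moleculeConst α C_D * decay α ^ j :=
    fun j => mul_pos (moleculeConst_pos hα hCD) (pow_pos (decay_pos α) j)
  have hsum : HasSum (fun j => |moleculeConst α C_D * decay α ^ j|) (moleculeBound α C_D) := by
    simp_rw [abs_of_pos (hlam _)]
    exact (hasSum_geometric_of_lt_one (decay_pos α).le (decay_lt_one hα)).mul_left _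
  obtain ⟨hFH1, hFnorm⟩ := memH1_of_hasL1Decomp hF
    (isAtom12_moleculePiece hd hr hQ hm hA hA₂ hAν hsize hα hCD)
    (hasL1Decomp_inv_smul (fun j => (hlam j).ne') hsum.summable
      (tendsto_eLpNorm_sub_sum_moleculePiece hd hr hQ hm hsize hα))
  exact ⟨⟨hm, F, hFH1, hFm⟩, (H1rnorm_le_H1norm hFH1 hFm).trans (hFnorm.trans_eq hsum.tsum_eq)⟩

end MoleculeDecomposition

/-- Since `4Q ⊄ X`, at least `3/8` of the measure of `8Q` lies below `X`. -/
lemma exists_corrector_disjoint_Xset {E : Type*} [MetricSpace E] [MeasurableSpace E]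
    [OpensMeasurableSpace E] {μ : Measure E} [SFinite μ] {C_D : ℝ} {c : ℝ × E} {r : ℝ}
    (hCD : 1 ≤ C_D) (hr : 0 < r) (hc₀ : 0 < c.1) (h4 : ¬ pball c (4 * r) ⊆ Xset E) :
    ∃ A, MeasurableSet A ∧ A ⊆ dyadicBall c r 2 ∧
      pmeas μ (dyadicBall c r 2) ≤ ENNReal.ofReal (8 * C_D) * pmeas μ A ∧
      Disjoint A (Xset E) := by
  have hc : c.1 < (4 * r) ^ 2 := fst_lt_sq_of_not_pball_subset_Xset (by positivity) h4
  have h8 : dyadicBall c r 2 = pball c (8 * r) := by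
    rw [dyadicBall]
    norm_num
  refine ⟨Ioo (c.1 - (8 * r) ^ 2) 0 ×ˢ ball c.2 (8 * r),
    measurableSet_Ioo.prod measurableSet_ball, ?_, ?_,
    disjoint_left.2 fun p hp hpX => lt_asymm hp.1.2 hpX⟩
  · rw [h8, pball_eq_prod (by positivity)]
    exact prod_mono (Ioo_subset_Ioo_right (by positivity)) subset_rfl
  · rw [h8, pmeas_pball (by positivity), pmeas, Measure.prod_prod, Real.volume_Ioo, ← mul_assoc,
      ← ENNReal.ofReal_mul (by linarith)]
    refine mul_le_mul_left (ENNReal.ofReal_le_ofReal ?_) _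
    nlinarith

/-- type (a) and type (b) molecules form a bounded subset of `H¹_r(X)`:
for every `α > 0` there is `C`, depending only on `α` and `C_D`, such that every type (a)
molecule and every type (b) molecule with parameter `α` lies in `H¹_r(X)` with norm `≤ C`. -/
theorem stmt7 (α : ℝ) (hα : 0 < α) (C_D : ℝ) (hCD : 1 ≤ C_D) :
    ∃ C : ℝ, 0 < C ∧
      ∀ (E : Type) (_ : MetricSpace E) (_ : MeasurableSpace E), BorelSpace E →
        ∀ μ : Measure E, DoublingWith μ C_D →
          ∀ (m : ℝ × E → ℝ) (c : ℝ × E) (r : ℝ),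
            (IsTypeAMolecule μ α c r m ∨ IsTypeBMolecule μ α c r m) →
            MemH1r μ m ∧ H1rnorm μ m ≤ C := by
  have hCD₀ : 0 < C_D := by linarith
  refine ⟨moleculeBound α C_D, moleculeBound_pos hα hCD₀, ?_⟩
  intro E _ _ _ μ hd m c r hmol
  rcases hmol with ⟨hr, hQ, -, hm, hT, hsize⟩ | ⟨hr, hQ, -, h4, hm, hsize⟩
  · exact memH1r_of_molSize hd hr hQ hm hsize hα hCD₀ (measurableSet_dyadicBallX hr 1)
      ((dyadicBallX_subset_dyadicBall 1).trans (dyadicBall_mono hr one_le_two))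
      (pmeas_dyadicBall_succ_le hd hr hQ 1) (Or.inl hT)
  · have := hd.sigmaFinite c.2
    obtain ⟨A, hA, hA₂, hAν, hAX⟩ := exists_corrector_disjoint_Xset (μ := μ) hCD hr
      (fst_pos_of_pball_subset_Xset hr hQ) h4
    exact memH1r_of_molSize hd hr hQ hm hsize hα hCD₀ hA hA₂ hAν (Or.inr hAX)
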